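/- arXiv:2307.15004 — 5 statements merged into one kernel-verified Lean document; each statement's English description precedes it below -/
import Mathlib

section
/- Let d ≥ 1 and let Σ and Θ be d×d real matrices such that Σ𝟏 = 0, Θᵀ𝟏 = 0, and ΣΘ = I − (1/d)𝟏𝟏ᵀ. Then for every real M > 0 the matrix Σ + M·𝟏𝟏ᵀ is invertible and (Σ + M·𝟏𝟏ᵀ)⁻¹ = Θ + (1/(d²M))·𝟏𝟏ᵀ. -/
open Matrix

noncomputable section

/-- The d×d all-ones matrix 𝟏𝟏ᵀ. -/
def allOnes (d : ℕ) : Matrix (Fin d) (Fin d) ℝ := Matrix.of fun _ _ => (1 : ℝ)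

/-- The all-ones vector 𝟏 in ℝ^d. -/
def onesVec (d : ℕ) : Fin d → ℝ := fun _ => (1 : ℝ)

/-! Write `J = 𝟏𝟏ᵀ`, so that `J² = d J`. The hypotheses say `ΣJ = 0` and `JΘ = 0`, hence in
`(Σ + M J)(Θ + c J)` both cross terms vanish and the product is `I - d⁻¹ J + M c d J`, which is `I`
exactly for `c = 1 / (d² M)`. A one-sided inverse of a square matrix is two-sided. -/

theorem add_smul_mul_add_smul_eq_one {K A : Type*} [Field K] [Ring A] [Algebra K A]
    {S T J : A} {d M : K} (hM : M ≠ 0) (hJJ : J * J = d • J) (hSJ : S * J = 0)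
    (hJT : J * T = 0) (hST : S * T = 1 - d⁻¹ • J) :
    (S + M • J) * (T + (1 / (d ^ 2 * M)) • J) = 1 := by
  have hcoeff : 1 / (d ^ 2 * M) * (M * d) = d⁻¹ := by
    -- at `d = 0` both sides are `0`, by the convention `0⁻¹ = 0`
    rcases eq_or_ne d 0 with rfl | hd
    · simp
    · field_simp
  simp only [add_mul, mul_add, smul_mul_assoc, mul_smul_comm, hSJ, hJT, hJJ, hST, smul_zero,
    add_zero, zero_add, smul_smul, hcoeff, sub_add_cancel]

theorem mul_allOnes_eq_zero {d : ℕ} {A : Matrix (Fin d) (Fin d) ℝ}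
    (hA : A *ᵥ onesVec d = 0) : A * allOnes d = 0 := by
  ext i j
  simpa [mul_apply, allOnes, mulVec, dotProduct, onesVec] using congrFun hA i

theorem allOnes_mul_eq_zero {d : ℕ} {A : Matrix (Fin d) (Fin d) ℝ}
    (hA : Aᵀ *ᵥ onesVec d = 0) : allOnes d * A = 0 := by
  ext i j
  simpa [mul_apply, allOnes, mulVec, dotProduct, onesVec] using congrFun hA j

theorem allOnes_mul_allOnes (d : ℕ) : allOnes d * allOnes d = (d : ℝ) • allOnes d := by
  ext i j
  simp [mul_apply, allOnes]

theorem extreme_glasso_stmt0_general (d : ℕ)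
    (Sig Th : Matrix (Fin d) (Fin d) ℝ)
    (hSig : Sig.mulVec (onesVec d) = 0)
    (hTh : Thᵀ.mulVec (onesVec d) = 0)
    (hprod : Sig * Th = 1 - ((d : ℝ))⁻¹ • allOnes d) :
    ∀ M : ℝ, 0 < M →
      IsUnit (Sig + M • allOnes d) ∧
      (Sig + M • allOnes d)⁻¹ = Th + (1 / ((d : ℝ) ^ 2 * M)) • allOnes d := by
  intro M hM
  have hinv : (Sig + M • allOnes d) * (Th + (1 / ((d : ℝ) ^ 2 * M)) • allOnes d) = 1 :=
    add_smul_mul_add_smul_eq_one hM.ne' (allOnes_mul_allOnes d) (mul_allOnes_eq_zero hSig)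
      (allOnes_mul_eq_zero hTh) hprod
  exact ⟨(isUnit_iff_isUnit_det _).mpr (isUnit_det_of_right_inverse hinv), inv_eq_right_inv hinv⟩

/-- Proposition 3.1: if Σ𝟏 = 0, Θᵀ𝟏 = 0 and ΣΘ = I − (1/d)𝟏𝟏ᵀ, then for every M > 0
the matrix Σ + M𝟏𝟏ᵀ is invertible with inverse Θ + (1/(d²M))𝟏𝟏ᵀ. -/
theorem extreme_glasso_stmt0 (d : ℕ) (hd : 1 ≤ d)
    (Sig Th : Matrix (Fin d) (Fin d) ℝ)
    (hSig : Sig.mulVec (onesVec d) = 0)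
    (hTh : Thᵀ.mulVec (onesVec d) = 0)
    (hprod : Sig * Th = 1 - ((d : ℝ))⁻¹ • allOnes d) :
    ∀ M : ℝ, 0 < M →
      IsUnit (Sig + M • allOnes d) ∧
      (Sig + M • allOnes d)⁻¹ = Th + (1 / ((d : ℝ) ^ 2 * M)) • allOnes d :=
  extreme_glasso_stmt0_general d Sig Th hSig hTh hprod
end
end

section
/- Let d ≥ 1 and let Γ be a symmetric d×d real matrix. For each k ∈ {1,…,d} define the d×d matrix Σ̃^(k) entrywise by Σ̃^(k)_{ij} = (Γ_{ik} + Γ_{jk} − Γ_{ij})/2, and define Σ := −(1/2)(I − 𝟏𝟏ᵀ/d) Γ (I − 𝟏𝟏ᵀ/d). Then (1/d)·Σ_{k=1}^d Σ̃^(k) = Σ + M_Σ·𝟏𝟏ᵀ, where M_Σ = (1/d³)·Σ_{k=1}^d 𝟏ᵀ Σ̃^(k) 𝟏. -/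
/-!
Entrywise everything is expressed through Γ_ij, the row sums r_i = ∑_k Γ_ik and the total
S = ∑_kl Γ_kl.  Averaging Σ̃^(k) gives (r_i + r_j − dΓ_ij)/(2d); double centering gives
−½(Γ_ij − r_i/d − r_j/d + S/d²), where symmetry turns the column sum of Γ into r_j; and
M_Σ = S/(2d²) exactly cancels the S term.
-/

open Matrix

noncomputable section

@[simp]
theorem allOnes_apply {d : ℕ} (i j : Fin d) : allOnes d i j = 1 := rfl

theorem allOnes_mul_apply {d : ℕ} (A : Matrix (Fin d) (Fin d) ℝ) (i j : Fin d) :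
    (allOnes d * A) i j = ∑ k, A k j := by
  simp [mul_apply]

theorem mul_allOnes_apply {d : ℕ} (A : Matrix (Fin d) (Fin d) ℝ) (i j : Fin d) :
    (A * allOnes d) i j = ∑ k, A i k := by
  simp [mul_apply]

theorem one_sub_smul_allOnes_mul_mul_apply {d : ℕ} (c : ℝ) (A : Matrix (Fin d) (Fin d) ℝ)
    (i j : Fin d) :
    ((1 - c • allOnes d) * A * (1 - c • allOnes d)) i j =
      A i j - c * ∑ k, A i k - c * ∑ k, A k j + c ^ 2 * ∑ k, ∑ l, A k l := by
  have hexpand : (1 - c • allOnes d) * A * (1 - c • allOnes d) =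
      A - c • (A * allOnes d) - c • (allOnes d * A) + c ^ 2 • (allOnes d * A * allOnes d) := by
    simp only [sub_mul, mul_sub, one_mul, mul_one, smul_mul_assoc, mul_smul_comm]
    module
  rw [hexpand]
  simp only [Matrix.add_apply, Matrix.sub_apply, Matrix.smul_apply, smul_eq_mul,
    mul_allOnes_apply, allOnes_mul_apply]
  rw [Finset.sum_comm]

section SigmaTilde

variable {n : Type*} [Fintype n]

def sigmaTilde (Γ : Matrix n n ℝ) (k : n) : Matrix n n ℝ :=
  of fun i j => (Γ i k + Γ j k - Γ i j) / 2

theorem sum_sigmaTilde_apply (Γ : Matrix n n ℝ) (i j : n) :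
    (∑ k, sigmaTilde Γ k) i j = (∑ k, Γ i k + ∑ k, Γ j k - Fintype.card n * Γ i j) / 2 := by
  simp [sigmaTilde, Matrix.sum_apply, ← Finset.sum_div, Finset.sum_add_distrib,
    Finset.sum_sub_distrib]

theorem sum_sum_sum_sigmaTilde (Γ : Matrix n n ℝ) :
    ∑ k, ∑ i, ∑ j, sigmaTilde Γ k i j = Fintype.card n * (∑ i, ∑ j, Γ i j) / 2 := by
  calc ∑ k, ∑ i, ∑ j, sigmaTilde Γ k i j = ∑ i, ∑ j, (∑ k, sigmaTilde Γ k) i j := by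
        simp only [Matrix.sum_apply]
        rw [Finset.sum_comm]
        exact Finset.sum_congr rfl fun i _ => Finset.sum_comm
    _ = Fintype.card n * (∑ i, ∑ j, Γ i j) / 2 := by
        simp only [sum_sigmaTilde_apply, ← Finset.sum_div, Finset.sum_add_distrib,
          Finset.sum_sub_distrib, Finset.sum_const, Finset.card_univ, nsmul_eq_mul,
          ← Finset.mul_sum]
        ring

end SigmaTilde

theorem extreme_glasso_stmt1_general (d : ℕ)
    (Γ : Matrix (Fin d) (Fin d) ℝ) (hΓ : Γ.IsSymm)
    (Sigt : Fin d → Matrix (Fin d) (Fin d) ℝ)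
    (hSigt : ∀ k i j, Sigt k i j = (Γ i k + Γ j k - Γ i j) / 2)
    (Sig : Matrix (Fin d) (Fin d) ℝ)
    (hSig : Sig = (-(1/2 : ℝ)) •
      ((1 - (d : ℝ)⁻¹ • allOnes d) * Γ * (1 - (d : ℝ)⁻¹ • allOnes d)))
    (MSig : ℝ)
    (hMSig : MSig = (1 / (d : ℝ) ^ 3) * ∑ k, ∑ i, ∑ j, Sigt k i j) :
    (1 / (d : ℝ)) • ∑ k, Sigt k = Sig + MSig • allOnes d := by
  obtain rfl : Sigt = sigmaTilde Γ := funext fun k => ext (hSigt k)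
  subst hSig hMSig
  ext i j
  have hd : (d : ℝ) ≠ 0 := Nat.cast_ne_zero.mpr i.pos.ne'
  have hcol : ∑ k, Γ k j = ∑ k, Γ j k := Finset.sum_congr rfl fun k _ => hΓ.apply j k
  simp only [Matrix.add_apply, Matrix.smul_apply, smul_eq_mul, allOnes_apply,
    sum_sigmaTilde_apply, sum_sum_sum_sigmaTilde, one_sub_smul_allOnes_mul_mul_apply, hcol,
    Fintype.card_fin]
  field_simp
  ring

/-- Proposition 3.2: with Σ̃^(k)_{ij} = (Γ_{ik} + Γ_{jk} − Γ_{ij})/2 and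
Σ = −(1/2)(I − 𝟏𝟏ᵀ/d)Γ(I − 𝟏𝟏ᵀ/d), one has
(1/d)·Σ_k Σ̃^(k) = Σ + M_Σ·𝟏𝟏ᵀ with M_Σ = (1/d³)·Σ_k 𝟏ᵀΣ̃^(k)𝟏. -/
theorem extreme_glasso_stmt1 (d : ℕ) (hd : 1 ≤ d)
    (Γ : Matrix (Fin d) (Fin d) ℝ) (hΓ : Γ.IsSymm)
    (Sigt : Fin d → Matrix (Fin d) (Fin d) ℝ)
    (hSigt : ∀ k i j, Sigt k i j = (Γ i k + Γ j k - Γ i j) / 2)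
    (Sig : Matrix (Fin d) (Fin d) ℝ)
    (hSig : Sig = (-(1/2 : ℝ)) •
      ((1 - (d : ℝ)⁻¹ • allOnes d) * Γ * (1 - (d : ℝ)⁻¹ • allOnes d)))
    (MSig : ℝ)
    (hMSig : MSig = (1 / (d : ℝ) ^ 3) * ∑ k, ∑ i, ∑ j, Sigt k i j) :
    (1 / (d : ℝ)) • ∑ k, Sigt k = Sig + MSig • allOnes d :=
  extreme_glasso_stmt1_general d Γ hΓ Sigt hSigt Sig hSig MSig hMSig
end
end

section
/- Let d ≥ 2, let Θ be a symmetric d×d real matrix with Θ𝟏 = 0 (all row sums equal to zero), and let M > 0. Define Θ* := Θ + (1/(d²M))·𝟏𝟏ᵀ. Then for every k ∈ {1,…,d}, det(Θ*) = (1/M)·det(Θ^(k)). -/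
open Matrix

noncomputable section

/-!
With `c = 1 / (d² M)`, replace row `k` of `Θ*` by the sum of all rows: since the column sums of `Θ`
vanish, this is the constant row `c d`, so `det Θ* = c d · det (Θ* with row k := 𝟏)`. Subtracting
`c` times that row from the others removes the perturbation and leaves `Θ` with row `k := 𝟏`, whose
row sums vanish except in row `k`, where it is `d`. Replacing column `k` by the sum of all columns
therefore produces `d eₖ`, and the cofactor expansion along it gives `d · det Θ^(k)`.
-/

namespace Matrix

variable {R ι : Type*} [CommRing R] [Fintype ι] [DecidableEq ι] {n : ℕ}

theorem det_updateRow_one_vecMul (B : Matrix ι ι R) (k : ι) :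
    (B.updateRow k (1 ᵥ* B)).det = B.det := by
  simpa [one_vecMul] using det_updateRow_sum B k 1

theorem det_updateCol_mulVec_one (B : Matrix ι ι R) (k : ι) :
    (B.updateCol k (B *ᵥ 1)).det = B.det := by
  have hsum : B *ᵥ 1 = fun i => ∑ j, (1 : ι → R) j • B i j := by
    ext i
    simp [mulVec, dotProduct]
  rw [hsum, det_updateCol_sum, Pi.one_apply, one_smul]

theorem det_updateRow_one_add_smul_of_one (A : Matrix ι ι R) (c : R) (k : ι) :
    ((A + c • of fun _ _ => 1).updateRow k 1).det = (A.updateRow k 1).det := by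
  refine det_eq_of_forall_row_eq_smul_add_const (fun i => if i = k then 0 else c) k (by simp) ?_
  intro i j
  rcases eq_or_ne i k with rfl | hik
  · simp
  · simp [hik]

theorem det_eq_mul_det_submatrix_of_mulVec_one_eq_single
    (B : Matrix (Fin (n + 1)) (Fin (n + 1)) R) (k : Fin (n + 1)) (a : R)
    (h : B *ᵥ 1 = Pi.single k a) :
    B.det = a * (B.submatrix k.succAbove k.succAbove).det := by
  rw [← det_updateCol_mulVec_one B k, h, ← cramer_apply, cramer_eq_adjugate_mulVec,
    mulVec_single, Pi.smul_apply, col_apply, adjugate_fin_succ_eq_det_submatrix,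
    Even.neg_one_pow ⟨k, rfl⟩, one_mul, op_smul_eq_mul, mul_comm]

theorem det_updateRow_one_of_mulVec_one_eq_zero
    (A : Matrix (Fin (n + 1)) (Fin (n + 1)) R) (hA : A *ᵥ 1 = 0) (k : Fin (n + 1)) :
    (A.updateRow k 1).det = (n + 1) * (A.submatrix k.succAbove k.succAbove).det := by
  have hsum : A.updateRow k 1 *ᵥ 1 = Pi.single k (n + 1) := by
    ext i
    rcases eq_or_ne i k with rfl | hik
    · simp [mulVec, dotProduct]
    · simpa [mulVec, dotProduct, updateRow_ne hik, hik] using congrFun hA i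
  rw [det_eq_mul_det_submatrix_of_mulVec_one_eq_single _ k _ hsum, submatrix_updateRow_succAbove,
    Nat.cast_succ]

theorem det_add_smul_of_one_eq_mul_det_submatrix
    (A : Matrix (Fin (n + 1)) (Fin (n + 1)) R) (hrow : A *ᵥ 1 = 0) (hcol : 1 ᵥ* A = 0)
    (c : R) (k : Fin (n + 1)) :
    (A + c • of fun _ _ => 1).det = c * (n + 1) ^ 2 * (A.submatrix k.succAbove k.succAbove).det := by
  set B := A + c • of fun _ _ => (1 : R)
  have hB : 1 ᵥ* B = (c * (n + 1)) • 1 := by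
    ext j
    simpa [B, vecMul, dotProduct, Finset.sum_add_distrib, mul_comm] using congrFun hcol j
  calc B.det = (B.updateRow k (1 ᵥ* B)).det := (det_updateRow_one_vecMul B k).symm
    _ = c * (n + 1) * (A.updateRow k 1).det := by
      rw [hB, det_updateRow_smul, det_updateRow_one_add_smul_of_one]
    _ = _ := by rw [det_updateRow_one_of_mulVec_one_eq_zero A hrow]; ring

end Matrix

theorem extreme_glasso_stmt4_general (n : ℕ)
    (M : ℝ)
    (Th : Matrix (Fin (n + 1)) (Fin (n + 1)) ℝ)
    (hsym : Th.IsSymm)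
    (hrow : Th.mulVec (fun _ => (1 : ℝ)) = 0)
    (Thstar : Matrix (Fin (n + 1)) (Fin (n + 1)) ℝ)
    (hThstar : Thstar = Th + (1 / (((n + 1 : ℕ) : ℝ) ^ 2 * M)) • allOnes (n + 1))
    (k : Fin (n + 1)) :
    Thstar.det = (1 / M) * (Th.submatrix k.succAbove k.succAbove).det := by
  have hcol : 1 ᵥ* Th = 0 := by rw [← hsym.eq, vecMul_transpose]; exact hrow
  have hscale : 1 / (((n + 1 : ℕ) : ℝ) ^ 2 * M) * (n + 1) ^ 2 = 1 / M := by
    rw [Nat.cast_succ, one_div, one_div, mul_inv, mul_right_comm, inv_mul_cancel₀ (by positivity),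
      one_mul]
  rw [hThstar, allOnes, det_add_smul_of_one_eq_mul_det_submatrix Th hrow hcol, hscale]

/-- Lemma C.1: for a symmetric d×d matrix Θ (d ≥ 2) with zero row sums and M > 0,
setting Θ* = Θ + (1/(d²M))𝟏𝟏ᵀ, one has det(Θ*) = (1/M)·det(Θ^(k)) for every k,
where Θ^(k) deletes the k-th row and column. -/
theorem extreme_glasso_stmt4 (n : ℕ) (hn : 1 ≤ n)
    (M : ℝ) (hM : 0 < M)
    (Th : Matrix (Fin (n + 1)) (Fin (n + 1)) ℝ)
    (hsym : Th.IsSymm)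
    (hrow : Th.mulVec (fun _ => (1 : ℝ)) = 0)
    (Thstar : Matrix (Fin (n + 1)) (Fin (n + 1)) ℝ)
    (hThstar : Thstar = Th + (1 / (((n + 1 : ℕ) : ℝ) ^ 2 * M)) • allOnes (n + 1))
    (k : Fin (n + 1)) :
    Thstar.det = (1 / M) * (Th.submatrix k.succAbove k.succAbove).det :=
  extreme_glasso_stmt4_general n M Th hsym hrow Thstar hThstar k
end
end

section
/- Let d ≥ 1, γ ≥ 0, c ∈ ℝ, and let S* be a symmetric positive definite d×d real matrix. Then the function f(Θ) := −log det(Θ) + tr(S*Θ) + γ·Σ_{i≠j} |Θ_{ij} − c|, defined on the set of symmetric positive definite d×d real matrices, attains a global minimum, and the minimizer is unique. -/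
/-!
`−log det` is strictly convex on positive definite matrices: writing `B = √A M √A` reduces
this to `A = 1`, where it is strict concavity of `log` at the eigenvalues of `M`. The trace
term is linear and the penalty convex, so the objective has at most one minimiser.

For existence, let `λ > 0` with `λ • 1 ≤ S*`, so that `tr (S* Θ) ≥ λ tr Θ`. Together with
`log det Θ ≤ (λ/2) tr Θ − d (1 + log (λ/2))` this shows that on the sublevel set
`{f ≤ f 1}` the trace is bounded above and `det` is bounded below by a positive constant,
so this set lies in a compact set of positive definite matrices on which `f` is continuous.
-/

open Matrix

noncomputable section

/-- The off-diagonal ℓ₁ penalty Σ_{i≠j} |Θ_{ij} − c|, summed over all ordered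
pairs (i,j) with i ≠ j. -/
def offDiagPenalty (d : ℕ) (c : ℝ) (Th : Matrix (Fin d) (Fin d) ℝ) : ℝ :=
  ∑ i, ∑ j ∈ Finset.univ.erase i, |Th i j - c|

/-- The extreme graphical lasso objective
f(Θ) = −log det(Θ) + tr(S*Θ) + γ·Σ_{i≠j} |Θ_{ij} − c|. -/
noncomputable def eglassoObjective (d : ℕ) (Sstar : Matrix (Fin d) (Fin d) ℝ)
    (γ c : ℝ) (Th : Matrix (Fin d) (Fin d) ℝ) : ℝ :=
  -Real.log Th.det + (Sstar * Th).trace + γ * offDiagPenalty d c Th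

open Real Set
open scoped MatrixOrder

namespace Matrix

variable {n : Type*}

lemma convex_setOf_posDef : Convex ℝ {A : Matrix n n ℝ | A.PosDef} :=
  convex_iff_forall_pos.2 fun _ hA _ hB _ _ ha hb _ => (hA.smul ha).add (hB.smul hb)

variable [Fintype n]

lemma PosSemidef.abs_apply_le_trace {A : Matrix n n ℝ} (hA : A.PosSemidef) (i j : n) :
    |A i j| ≤ A.trace := by
  have hdiag (k : n) : A k k ≤ A.trace :=
    Finset.single_le_sum (f := fun k => A k k) (fun k _ => hA.diag_nonneg) (Finset.mem_univ k)
  have hminor := (hA.submatrix ![i, j]).det_nonneg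
  rw [det_fin_two] at hminor
  simp only [submatrix_apply, Matrix.cons_val_zero, Matrix.cons_val_one] at hminor
  have hsymm : A j i = A i j := by simpa using congrFun (congrFun hA.isHermitian.eq i) j
  refine abs_le_of_sq_le_sq ?_ hA.trace_nonneg
  calc A i j ^ 2 = A i j * A j i := by rw [hsymm, sq]
    _ ≤ A i i * A j j := by linarith
    _ ≤ A.trace ^ 2 := by
      rw [sq]; exact mul_le_mul (hdiag i) (hdiag j) hA.diag_nonneg hA.trace_nonneg

lemma isClosed_setOf_posSemidef : IsClosed {A : Matrix n n ℝ | A.PosSemidef} := by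
  simp only [posSemidef_iff_dotProduct_mulVec, ofPred_and, ofPred_forall]
  exact (isClosed_eq continuous_id.matrix_conjTranspose continuous_id).inter
    (isClosed_iInter fun x => isClosed_le continuous_const (by fun_prop))

variable [DecidableEq n]

lemma PosSemidef.trace_mul_nonneg {A B : Matrix n n ℝ} (hA : A.PosSemidef) (hB : B.PosSemidef) :
    0 ≤ (A * B).trace := by
  obtain ⟨C, rfl⟩ := CStarAlgebra.nonneg_iff_eq_star_mul_self.mp hB.nonneg
  rw [← mul_assoc, trace_mul_comm, ← mul_assoc]
  exact (hA.mul_mul_conjTranspose_same C).trace_nonneg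

lemma PosDef.exists_pos_mul_trace_le_trace_mul {S : Matrix n n ℝ} (hS : S.PosDef) :
    ∃ m > 0, ∀ A : Matrix n n ℝ, A.PosSemidef → m * A.trace ≤ (S * A).trace := by
  cases isEmpty_or_nonempty n
  -- `CFC.exists_pos_algebraMap_le_iff` needs a nontrivial algebra
  · exact ⟨1, one_pos, fun A _ => by simp [trace]⟩
  obtain ⟨m, hm, hmS⟩ := (CFC.exists_pos_algebraMap_le_iff hS.isHermitian.isSelfAdjoint).2
    fun _ hx => hS.isStrictlyPositive.spectrum_pos hx
  refine ⟨m, hm, fun A hA => ?_⟩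
  have := (le_iff.1 hmS).trace_mul_nonneg hA
  rw [sub_mul, trace_sub, Algebra.algebraMap_eq_smul_one, smul_mul_assoc, one_mul, trace_smul,
    smul_eq_mul] at this
  linarith

lemma PosDef.log_det_le {A : Matrix n n ℝ} (hA : A.PosDef) {t : ℝ} (ht : 0 < t) :
    log A.det ≤ t * A.trace - Fintype.card n * (1 + log t) := by
  have hH := hA.isHermitian
  have hpos := hA.eigenvalues_pos
  rw [hH.det_eq_prod_eigenvalues, hH.trace_eq_sum_eigenvalues]
  simp only [RCLike.ofReal_real_eq_id, id]
  rw [log_prod (fun i _ => (hpos i).ne'), Finset.mul_sum, ← Finset.card_univ, ← nsmul_eq_mul,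
    ← Finset.sum_const, ← Finset.sum_sub_distrib]
  refine Finset.sum_le_sum fun i _ => ?_
  have := log_le_sub_one_of_pos (mul_pos ht (hpos i))
  rw [log_mul ht.ne' (hpos i).ne'] at this
  linarith

lemma IsHermitian.det_cfc {A : Matrix n n ℝ} (hA : A.IsHermitian) (f : ℝ → ℝ) :
    (cfc f A).det = ∏ i, f (hA.eigenvalues i) := by
  rw [hA.cfc_eq]
  simp [IsHermitian.cfc, -Unitary.conjStarAlgAut_apply]

lemma IsHermitian.eq_one_of_eigenvalues_eq_one {A : Matrix n n ℝ} (hA : A.IsHermitian)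
    (h : ∀ i, hA.eigenvalues i = 1) : A = 1 := by
  have : (RCLike.ofReal ∘ hA.eigenvalues : n → ℝ) = 1 := funext fun i => by simp [h i]
  rw [hA.spectral_theorem, this, Pi.one_def, diagonal_one, map_one]

lemma PosDef.mul_log_det_lt_log_det_smul_one_add_smul {M : Matrix n n ℝ} (hM : M.PosDef)
    (hM1 : M ≠ 1) {a b : ℝ} (ha : 0 < a) (hb : 0 < b) (hab : a + b = 1) :
    b * log M.det < log (a • 1 + b • M).det := by
  have hH := hM.isHermitian
  have hpos := hM.eigenvalues_pos
  have hcfc : a • (1 : Matrix n n ℝ) + b • M = cfc (fun x => a + b * x) M := by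
    rw [cfc_add .., cfc_const .., cfc_const_mul .., cfc_id' ..]
    simp [Algebra.algebraMap_eq_smul_one]
  rw [hcfc, hH.det_cfc, hH.det_eq_prod_eigenvalues]
  simp only [RCLike.ofReal_real_eq_id, id]
  rw [log_prod (fun i _ => (hpos i).ne'), log_prod (fun i _ => by have := hpos i; positivity),
    Finset.mul_sum]
  obtain ⟨j, hj⟩ : ∃ j, hH.eigenvalues j ≠ 1 := by
    by_contra! h
    exact hM1 (hH.eq_one_of_eigenvalues_eq_one h)
  have hlog_lt (i) (hi : hH.eigenvalues i ≠ 1) :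
      b * log (hH.eigenvalues i) < log (a + b * hH.eigenvalues i) := by
    simpa using strictConcaveOn_log_Ioi.2 (mem_Ioi.2 one_pos) (mem_Ioi.2 (hpos i)) hi.symm ha hb hab
  refine Finset.sum_lt_sum (fun i _ => ?_) ⟨j, Finset.mem_univ _, hlog_lt j hj⟩
  rcases eq_or_ne (hH.eigenvalues i) 1 with hi | hi
  · rw [hi]; simp [hab]
  · exact (hlog_lt i hi).le

theorem strictConcaveOn_log_det :
    StrictConcaveOn ℝ {A : Matrix n n ℝ | A.PosDef} (fun A => log A.det) := by
  refine ⟨convex_setOf_posDef, fun A hA B hB hAB a b ha hb hab => ?_⟩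
  simp only [mem_ofPred_eq] at hA hB
  set Q := CFC.sqrt A
  have hQQ : Q * Q = A := CFC.sqrt_mul_sqrt_self A hA.posSemidef.nonneg
  have hQ : IsUnit Q.det :=
    (isUnit_iff_isUnit_det Q).1 (CFC.isUnit_sqrt_iff_isStrictlyPositive.2 hA.isStrictlyPositive)
  set M := Q⁻¹ * B * Q⁻¹
  have hQM : Q * M * Q = B := by
    simp only [M, ← mul_assoc, mul_nonsing_inv _ hQ, one_mul]
    rw [mul_assoc, nonsing_inv_mul _ hQ, mul_one]
  have hM : M.PosDef := by
    rw [← (isUnit_iff_isUnit_det Q).2 hQ |>.posDef_star_right_conjugate_iff,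
      (CFC.sqrt_nonneg A).isSelfAdjoint, hQM]
    exact hB
  have hM1 : M ≠ 1 := fun h => hAB (by rw [← hQM, h, mul_one, hQQ])
  have hN : (a • 1 + b • M).PosDef := (PosDef.one.smul ha).add (hM.smul hb)
  have hdetQ : Q.det * Q.det = A.det := by rw [← det_mul, hQQ]
  have hmid : a • A + b • B = Q * (a • 1 + b • M) * Q := by
    rw [← hQQ, ← hQM]; simp only [mul_add, add_mul, mul_smul_comm, smul_mul_assoc, mul_one]
  have hdet : (a • A + b • B).det = A.det * (a • 1 + b • M).det := by
    rw [hmid, det_mul, det_mul, ← hdetQ]; ring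
  have hdetB : B.det = A.det * M.det := by
    rw [← hQM, det_mul, det_mul, ← hdetQ]; ring
  simp only [smul_eq_mul]
  rw [hdet, hdetB, log_mul hA.det_pos.ne' hN.det_pos.ne', log_mul hA.det_pos.ne' hM.det_pos.ne']
  linear_combination hM.mul_log_det_lt_log_det_smul_one_add_smul hM1 ha hb hab + log A.det * hab

end Matrix

theorem exists_isMinOn_of_isCompact_of_sublevel_subset {X α : Type*} [TopologicalSpace X]
    [LinearOrder α] [TopologicalSpace α] [ClosedIicTopology α] {s K : Set X} {f : X → α}
    {x₀ : X} (hK : IsCompact K) (hKs : K ⊆ s) (hf : ContinuousOn f K) (hx₀ : x₀ ∈ s)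
    (hsub : {x ∈ s | f x ≤ f x₀} ⊆ K) : ∃ x ∈ s, IsMinOn f s x := by
  have hx₀K : x₀ ∈ K := hsub ⟨hx₀, le_rfl⟩
  obtain ⟨x, hxK, hmin⟩ := hK.exists_isMinOn ⟨x₀, hx₀K⟩ hf
  refine ⟨x, hKs hxK, fun y hy => ?_⟩
  by_cases hy₀ : f y ≤ f x₀
  · exact hmin (hsub ⟨hy, hy₀⟩)
  · exact (hmin hx₀K).trans (le_of_not_ge hy₀)

section EGlasso

variable {d : ℕ} {Sstar : Matrix (Fin d) (Fin d) ℝ} {γ c : ℝ}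

lemma offDiagPenalty_nonneg (c : ℝ) (Θ : Matrix (Fin d) (Fin d) ℝ) :
    0 ≤ offDiagPenalty d c Θ :=
  Finset.sum_nonneg fun _ _ => Finset.sum_nonneg fun _ _ => abs_nonneg _

lemma continuous_offDiagPenalty (d : ℕ) (c : ℝ) : Continuous (offDiagPenalty d c) := by
  unfold offDiagPenalty; fun_prop

lemma convexOn_offDiagPenalty (d : ℕ) (c : ℝ) : ConvexOn ℝ univ (offDiagPenalty d c) := by
  refine ⟨convex_univ, fun X _ Y _ a b ha hb hab => ?_⟩
  simp only [offDiagPenalty, smul_eq_mul, Finset.mul_sum, ← Finset.sum_add_distrib]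
  gcongr with i _ j _
  calc |(a • X + b • Y) i j - c| = |a * (X i j - c) + b * (Y i j - c)| := by
        congr 1
        simp only [Matrix.add_apply, Matrix.smul_apply, smul_eq_mul]
        linear_combination c * hab
    _ ≤ a * |X i j - c| + b * |Y i j - c| := by
        grw [abs_add_le, abs_mul, abs_mul, abs_of_nonneg ha, abs_of_nonneg hb]

lemma strictConvexOn_eglassoObjective (hγ : 0 ≤ γ) :
    StrictConvexOn ℝ {Θ : Matrix (Fin d) (Fin d) ℝ | Θ.PosDef}
      (eglassoObjective d Sstar γ c) := by
  have htrace :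
      ConvexOn ℝ {Θ : Matrix (Fin d) (Fin d) ℝ | Θ.PosDef} fun Θ => (Sstar * Θ).trace :=
    ⟨convex_setOf_posDef, fun X _ Y _ a b _ _ _ => by simp [mul_add, trace_add]⟩
  exact (strictConcaveOn_log_det.neg.add_convexOn htrace).add_convexOn
    (((convexOn_offDiagPenalty d c).smul hγ).subset (subset_univ _) convex_setOf_posDef)

lemma exp_neg_le_det_and_trace_le_of_eglassoObjective_le (hγ : 0 ≤ γ) {m : ℝ} (hm : 0 < m)
    (hmS : ∀ A : Matrix (Fin d) (Fin d) ℝ, A.PosSemidef → m * A.trace ≤ (Sstar * A).trace)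
    {Θ : Matrix (Fin d) (Fin d) ℝ} (hΘ : Θ.PosDef) {B : ℝ}
    (hB : eglassoObjective d Sstar γ c Θ ≤ B) :
    exp (-B) ≤ Θ.det ∧ Θ.trace ≤ 2 / m * (B - d * (1 + log (m / 2))) := by
  have hSΘ := hmS Θ hΘ.posSemidef
  have hmΘ := mul_nonneg hm.le hΘ.posSemidef.trace_nonneg
  have hpen := mul_nonneg hγ (offDiagPenalty_nonneg c Θ)
  have hlog := hΘ.log_det_le (half_pos hm)
  rw [Fintype.card_fin] at hlog
  unfold eglassoObjective at hB
  constructor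
  · rw [← exp_log hΘ.det_pos]
    exact exp_le_exp.2 (by linarith)
  · rw [div_mul_eq_mul_div, le_div_iff₀ hm]
    linarith

theorem exists_isMinOn_eglassoObjective (hγ : 0 ≤ γ) (hS : Sstar.PosDef) :
    ∃ Θ ∈ {Θ : Matrix (Fin d) (Fin d) ℝ | Θ.PosDef},
      IsMinOn (eglassoObjective d Sstar γ c) {Θ | Θ.PosDef} Θ := by
  obtain ⟨m, hm, hmS⟩ := hS.exists_pos_mul_trace_le_trace_mul
  set B := eglassoObjective d Sstar γ c 1
  set T := 2 / m * (B - d * (1 + log (m / 2)))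
  set K :=
    {Θ : Matrix (Fin d) (Fin d) ℝ | Θ.PosSemidef ∧ exp (-B) ≤ Θ.det ∧ Θ.trace ≤ T}
  have hKpd : K ⊆ {Θ | Θ.PosDef} := fun Θ hΘ =>
    hΘ.1.posDef_iff_det_ne_zero.2 ((exp_pos _).trans_le hΘ.2.1).ne'
  have hK : IsCompact K := by
    have hclosed : IsClosed K :=
      isClosed_setOf_posSemidef.inter ((isClosed_le continuous_const continuous_id.matrix_det).inter
        (isClosed_le continuous_id.matrix_trace continuous_const))
    exact (isCompact_univ_pi fun _ => isCompact_univ_pi fun _ => isCompact_Icc).of_isClosed_subset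
      hclosed fun Θ hΘ i _ j _ => abs_le.1 ((hΘ.1.abs_apply_le_trace i j).trans hΘ.2.2)
  have hf : ContinuousOn (eglassoObjective d Sstar γ c) K := by
    unfold eglassoObjective
    have hpen := continuous_offDiagPenalty d c
    fun_prop (disch := exact fun Θ hΘ => ((exp_pos _).trans_le hΘ.2.1).ne')
  refine exists_isMinOn_of_isCompact_of_sublevel_subset hK hKpd hf PosDef.one ?_
  rintro Θ ⟨hΘ, hΘB⟩
  exact ⟨hΘ.posSemidef, exp_neg_le_det_and_trace_le_of_eglassoObjective_le hγ hm hmS hΘ hΘB⟩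

end EGlasso

theorem extreme_glasso_stmt8_general (d : ℕ)
    (γ c : ℝ) (hγ : 0 ≤ γ)
    (Sstar : Matrix (Fin d) (Fin d) ℝ) (hSpd : Sstar.PosDef) :
    ∃! Th : Matrix (Fin d) (Fin d) ℝ,
      (Th.IsSymm ∧ Th.PosDef) ∧
      ∀ Th' : Matrix (Fin d) (Fin d) ℝ, Th'.IsSymm → Th'.PosDef →
        eglassoObjective d Sstar γ c Th ≤ eglassoObjective d Sstar γ c Th' := by
  have isSymm_of_posDef {A : Matrix (Fin d) (Fin d) ℝ} (hA : A.PosDef) : A.IsSymm :=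
    isHermitian_iff_isSymm.1 hA.isHermitian
  obtain ⟨Θ, hΘ, hmin⟩ := exists_isMinOn_eglassoObjective (c := c) hγ hSpd
  refine ⟨Θ, ⟨⟨isSymm_of_posDef hΘ, hΘ⟩, fun Θ' _ hΘ' => hmin hΘ'⟩, ?_⟩
  rintro Θ' ⟨⟨-, hΘ'⟩, hmin'⟩
  exact (strictConvexOn_eglassoObjective hγ).eq_of_isMinOn
    (fun A hA => hmin' A (isSymm_of_posDef hA) hA) hmin hΘ' hΘ

/-- Existence and uniqueness of the minimizer of the extreme graphical lasso
objective over symmetric positive definite matrices. -/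
theorem extreme_glasso_stmt8 (d : ℕ) (hd : 1 ≤ d)
    (γ c : ℝ) (hγ : 0 ≤ γ)
    (Sstar : Matrix (Fin d) (Fin d) ℝ) (hSsym : Sstar.IsSymm) (hSpd : Sstar.PosDef) :
    ∃! Th : Matrix (Fin d) (Fin d) ℝ,
      (Th.IsSymm ∧ Th.PosDef) ∧
      ∀ Th' : Matrix (Fin d) (Fin d) ℝ, Th'.IsSymm → Th'.PosDef →
        eglassoObjective d Sstar γ c Th ≤ eglassoObjective d Sstar γ c Th' :=
  extreme_glasso_stmt8_general d γ c hγ Sstar hSpd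
end
end

section
/- Let d ≥ 1, let A and B be symmetric d×d real matrices with A invertible and B = A⁻¹, and let Δ be a symmetric d×d real matrix each of whose rows has at most D nonzero entries. Suppose D·|||B|||_∞·‖Δ‖_∞ ≤ q for some q < 1. Then A + Δ is invertible and ‖(A + Δ)⁻¹ − B + BΔB‖_∞ ≤ D·‖Δ‖_∞²·|||B|||_∞³ / (1 − q). -/
/-!
Put `N = (A + Δ)⁻¹`. The resolvent identities `N = B - BΔN = B - NΔB` turn the remainder
into the exact second-order term `N - B + BΔB = BΔ·NΔ·B`. Row sparsity gives
`|||Δ|||_∞ ≤ D‖Δ‖_∞`, so `|||BΔ|||_∞ ≤ q < 1`: the Neumann series makes `A + Δ = A(1 + BΔ)`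
invertible, and `N = B - BΔN` gives `|||N|||_∞ ≤ |||B|||_∞ / (1 - q)`. Finally
`‖XY‖_∞ ≤ |||X|||_∞ ‖Y‖_∞`, and `‖XB‖_∞ ≤ ‖X‖_∞ |||Bᵀ|||_∞ = ‖X‖_∞ |||B|||_∞` because `B` is
symmetric.
-/

open Matrix

noncomputable section

/-- Elementwise max-norm ‖A‖_∞ = max_{i,j} |A_{ij}|. -/
def elemNorm {m n : Type*} [Fintype m] [Fintype n] (A : Matrix m n ℝ) : ℝ :=
  ⨆ i, ⨆ j, |A i j|

/-- ℓ∞-operator norm |||A|||_∞ = max_i Σ_j |A_{ij}|. -/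
def opNormInf {m n : Type*} [Fintype m] [Fintype n] (A : Matrix m n ℝ) : ℝ :=
  ⨆ i, ∑ j, |A i j|

section Ring

variable {R : Type*} [Ring R] {a b x δ : R}

theorem eq_sub_mul_mul_of_mul_eq_one (hba : b * a = 1) (hx : (a + δ) * x = 1) :
    x = b - b * δ * x := by
  refine eq_sub_of_add_eq ?_
  calc x + b * δ * x = b * ((a + δ) * x) := by
        rw [add_mul, mul_add, ← mul_assoc b a, hba, one_mul, mul_assoc]
    _ = b := by rw [hx, mul_one]

theorem eq_sub_mul_mul_of_mul_eq_one' (hab : a * b = 1) (hx : x * (a + δ) = 1) :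
    x = b - x * δ * b := by
  refine eq_sub_of_add_eq ?_
  calc x + x * δ * b = x * (a + δ) * b := by rw [mul_add, add_mul, mul_assoc x a, hab, mul_one]
    _ = b := by rw [hx, one_mul]

theorem sub_add_mul_mul_eq_of_mul_eq_one (hba : b * a = 1) (hab : a * b = 1)
    (hx : (a + δ) * x = 1) (hx' : x * (a + δ) = 1) :
    x - b + b * δ * b = b * δ * (x * δ * b) := by
  calc x - b + b * δ * b = b * δ * b - b * δ * x := by
        nth_rw 1 [eq_sub_mul_mul_of_mul_eq_one hba hx]; abel
    _ = b * δ * (x * δ * b) := by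
        rw [← mul_sub]; nth_rw 1 [eq_sub_mul_mul_of_mul_eq_one' hab hx']; rw [sub_sub_cancel]

end Ring

variable {k l m n o : Type*} [Fintype k] [Fintype l] [Fintype m] [Fintype n] [Fintype o]

section Elementwise

open scoped Matrix.Norms.Elementwise

theorem elemNorm_eq_norm (A : Matrix m n ℝ) : elemNorm A = ‖A‖ := by
  simp [elemNorm, Matrix.norm_def, Pi.norm_def, Finset.sup_univ_eq_ciSup, NNReal.coe_iSup]

theorem elemNorm_nonneg (A : Matrix m n ℝ) : 0 ≤ elemNorm A :=
  elemNorm_eq_norm A ▸ norm_nonneg A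

theorem abs_le_elemNorm (A : Matrix m n ℝ) (i : m) (j : n) : |A i j| ≤ elemNorm A :=
  elemNorm_eq_norm A ▸ A.norm_entry_le_entrywise_sup_norm

theorem elemNorm_le {A : Matrix m n ℝ} {c : ℝ} (hc : 0 ≤ c) (h : ∀ i j, |A i j| ≤ c) :
    elemNorm A ≤ c :=
  elemNorm_eq_norm A ▸ (norm_le_iff hc).2 h

theorem elemNorm_transpose (A : Matrix m n ℝ) : elemNorm Aᵀ = elemNorm A := by
  simp only [elemNorm_eq_norm, norm_transpose]

end Elementwise

section Operator

open scoped Matrix.Norms.Operator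

theorem opNormInf_eq_norm (A : Matrix m n ℝ) : opNormInf A = ‖A‖ := by
  simp [opNormInf, linfty_opNorm_def, Finset.sup_univ_eq_ciSup, NNReal.coe_iSup]

theorem opNormInf_nonneg (A : Matrix m n ℝ) : 0 ≤ opNormInf A :=
  opNormInf_eq_norm A ▸ norm_nonneg A

theorem opNormInf_mul_le (A : Matrix l m ℝ) (B : Matrix m n ℝ) :
    opNormInf (A * B) ≤ opNormInf A * opNormInf B := by
  simpa only [opNormInf_eq_norm] using linfty_opNorm_mul A B

theorem opNormInf_le_div_of_eq_sub_mul {N B T : Matrix n n ℝ} {q : ℝ} (h : N = B - T * N)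
    (hT : opNormInf T ≤ q) (hq : q < 1) : opNormInf N ≤ opNormInf B / (1 - q) := by
  have hN : opNormInf N ≤ opNormInf B + opNormInf T * opNormInf N := by
    simpa only [← h, opNormInf_eq_norm] using
      (norm_sub_le B (T * N)).trans (add_le_add_right (norm_mul_le T N) _)
  have hTN : opNormInf T * opNormInf N ≤ q * opNormInf N :=
    mul_le_mul_of_nonneg_right hT (opNormInf_nonneg N)
  rw [le_div_iff₀ (sub_pos.2 hq)]
  linarith

theorem isUnit_det_add_of_opNormInf_inv_mul_lt_one [DecidableEq n] {A Δ : Matrix n n ℝ}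
    (hA : IsUnit A.det) (h : opNormInf (A⁻¹ * Δ) < 1) : IsUnit (A + Δ).det := by
  have hfactor : A + Δ = A * (1 - -(A⁻¹ * Δ)) := by
    rw [sub_neg_eq_add, mul_add, mul_one, mul_nonsing_inv_cancel_left A Δ hA]
  rw [← isUnit_iff_isUnit_det, hfactor]
  exact ((isUnit_iff_isUnit_det A).2 hA).mul
    (isUnit_one_sub_of_norm_lt_one (by rwa [norm_neg, ← opNormInf_eq_norm]))

end Operator

theorem sum_abs_le_opNormInf (A : Matrix m n ℝ) (i : m) : ∑ j, |A i j| ≤ opNormInf A :=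
  le_ciSup (f := fun i => ∑ j, |A i j|) (Set.finite_range _).bddAbove i

theorem opNormInf_le_mul_elemNorm_of_card_support_le {A : Matrix m n ℝ} {D : ℕ}
    (h : ∀ i, (Finset.univ.filter fun j => A i j ≠ 0).card ≤ D) :
    opNormInf A ≤ D * elemNorm A := by
  refine Real.iSup_le (fun i => ?_) (mul_nonneg D.cast_nonneg (elemNorm_nonneg A))
  calc ∑ j, |A i j| = ∑ j ∈ Finset.univ.filter fun j => A i j ≠ 0, |A i j| :=
        (Finset.sum_filter_of_ne fun j _ hj => abs_ne_zero.1 hj).symm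
    _ ≤ (Finset.univ.filter fun j => A i j ≠ 0).card * elemNorm A := by
        simpa using
          Finset.sum_le_card_nsmul _ (fun j => |A i j|) _ fun j _ => abs_le_elemNorm A i j
    _ ≤ D * elemNorm A := by gcongr; exacts [elemNorm_nonneg A, h i]

theorem elemNorm_mul_le_opNormInf_mul (X : Matrix l m ℝ) (Y : Matrix m n ℝ) :
    elemNorm (X * Y) ≤ opNormInf X * elemNorm Y := by
  refine elemNorm_le (mul_nonneg (opNormInf_nonneg X) (elemNorm_nonneg Y)) fun i j => ?_
  calc |(X * Y) i j| ≤ ∑ k, |X i k| * |Y k j| := by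
        simpa only [mul_apply, abs_mul] using Finset.abs_sum_le_sum_abs (fun k => X i k * Y k j) _
    _ ≤ ∑ k, |X i k| * elemNorm Y := by gcongr; exact abs_le_elemNorm Y _ j
    _ = (∑ k, |X i k|) * elemNorm Y := (Finset.sum_mul ..).symm
    _ ≤ opNormInf X * elemNorm Y := by
        gcongr
        exacts [elemNorm_nonneg Y, sum_abs_le_opNormInf X i]

theorem elemNorm_mul_le_mul_opNormInf_transpose (X : Matrix l m ℝ) (Y : Matrix m n ℝ) :
    elemNorm (X * Y) ≤ elemNorm X * opNormInf Yᵀ := by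
  rw [← elemNorm_transpose, transpose_mul, mul_comm, ← elemNorm_transpose X]
  exact elemNorm_mul_le_opNormInf_mul Yᵀ Xᵀ

theorem elemNorm_mul_mul_mul_le (W : Matrix k l ℝ) (X : Matrix l m ℝ) (Y : Matrix m n ℝ)
    (Z : Matrix n o ℝ) :
    elemNorm (W * (X * Y * Z)) ≤ opNormInf W * (opNormInf X * elemNorm Y * opNormInf Zᵀ) :=
  (elemNorm_mul_le_opNormInf_mul W _).trans <| mul_le_mul_of_nonneg_left
    ((elemNorm_mul_le_mul_opNormInf_transpose (X * Y) Z).trans <| mul_le_mul_of_nonneg_right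
      (elemNorm_mul_le_opNormInf_mul X Y) (opNormInf_nonneg Zᵀ))
    (opNormInf_nonneg W)

theorem extreme_glasso_stmt11_general (d : ℕ)
    (D : ℕ) (q : ℝ) (hq : q < 1)
    (A B Δ : Matrix (Fin d) (Fin d) ℝ)
    (hAsym : A.IsSymm)
    (hAinv : IsUnit A.det) (hBA : B = A⁻¹)
    (hrows : ∀ i : Fin d, (Finset.univ.filter fun j => Δ i j ≠ 0).card ≤ D)
    (hbound : (D : ℝ) * opNormInf B * elemNorm Δ ≤ q) :
    IsUnit (A + Δ).det ∧
    elemNorm ((A + Δ)⁻¹ - B + B * Δ * B) ≤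
      (D : ℝ) * (elemNorm Δ) ^ 2 * (opNormInf B) ^ 3 / (1 - q) := by
  have hBΔ : opNormInf (B * Δ) ≤ opNormInf B * (D * elemNorm Δ) :=
    (opNormInf_mul_le B Δ).trans <| mul_le_mul_of_nonneg_left
      (opNormInf_le_mul_elemNorm_of_card_support_le hrows) (opNormInf_nonneg B)
  have hBΔq : opNormInf (B * Δ) ≤ q := hBΔ.trans (by linarith)
  have hunit := isUnit_det_add_of_opNormInf_inv_mul_lt_one hAinv (hBA ▸ hBΔq.trans_lt hq)
  refine ⟨hunit, ?_⟩
  have hBA1 : B * A = 1 := hBA ▸ nonsing_inv_mul A hAinv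
  have hAB1 : A * B = 1 := hBA ▸ mul_nonsing_inv A hAinv
  set N := (A + Δ)⁻¹
  have hN : opNormInf N ≤ opNormInf B / (1 - q) := opNormInf_le_div_of_eq_sub_mul
    (eq_sub_mul_mul_of_mul_eq_one hBA1 (mul_nonsing_inv _ hunit)) hBΔq hq
  have hBsym : Bᵀ = B := by rw [hBA, transpose_nonsing_inv, hAsym.eq]
  rw [sub_add_mul_mul_eq_of_mul_eq_one hBA1 hAB1 (mul_nonsing_inv _ hunit)
    (nonsing_inv_mul _ hunit)]
  have hB0 := opNormInf_nonneg B
  have hΔ0 := elemNorm_nonneg Δ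
  have hN0 := opNormInf_nonneg N
  calc elemNorm (B * Δ * (N * Δ * B))
      ≤ opNormInf (B * Δ) * (opNormInf N * elemNorm Δ * opNormInf Bᵀ) :=
        elemNorm_mul_mul_mul_le _ _ _ _
    _ ≤ opNormInf B * (D * elemNorm Δ) * (opNormInf B / (1 - q) * elemNorm Δ * opNormInf B) := by
        rw [hBsym]; gcongr
    _ = D * elemNorm Δ ^ 2 * opNormInf B ^ 3 / (1 - q) := by ring

/-- Neumann-series remainder bound from the proof of Theorem 4.1: if A is
symmetric invertible with inverse B, Δ is symmetric with at most D nonzero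
entries per row, and D·|||B|||_∞·‖Δ‖_∞ ≤ q < 1, then A + Δ is invertible and
‖(A+Δ)⁻¹ − B + BΔB‖_∞ ≤ D·‖Δ‖_∞²·|||B|||_∞³/(1−q). -/
theorem extreme_glasso_stmt11 (d : ℕ) (hd : 1 ≤ d)
    (D : ℕ) (q : ℝ) (hq : q < 1)
    (A B Δ : Matrix (Fin d) (Fin d) ℝ)
    (hAsym : A.IsSymm) (hΔsym : Δ.IsSymm)
    (hAinv : IsUnit A.det) (hBA : B = A⁻¹)
    (hrows : ∀ i : Fin d, (Finset.univ.filter fun j => Δ i j ≠ 0).card ≤ D)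
    (hbound : (D : ℝ) * opNormInf B * elemNorm Δ ≤ q) :
    IsUnit (A + Δ).det ∧
    elemNorm ((A + Δ)⁻¹ - B + B * Δ * B) ≤
      (D : ℝ) * (elemNorm Δ) ^ 2 * (opNormInf B) ^ 3 / (1 - q) :=
  extreme_glasso_stmt11_general d D q hq A B Δ hAsym hAinv hBA hrows hbound
end
end
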